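/- Let D ⊂ ℝ³ be a countable set and L a line through the origin not meeting D. Then there exists a rotation ρ ∈ SO(3) about L such that the sets ρⁿD for n ≥ 0 are pairwise disjoint; consequently, setting A = ⋃_{n≥0} ρⁿD, one has ρ·A = A \ D. -/

import Mathlib

open scoped Pointwise

/-- `A` and `B` are `G`-equidecomposable: there are finite partitions
`A = A₁ ∪ … ∪ Aₙ` and `B = B₁ ∪ … ∪ Bₙ` into pairwise disjoint pieces and
`g₁, …, gₙ ∈ G` with `Bᵢ = gᵢ • Aᵢ`. -/
def Equidecomp' (G : Type*) {X : Type*} [Group G] [MulAction G X] (A B : Set X) : Prop :=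
  ∃ (n : ℕ) (P : Fin n → Set X) (g : Fin n → G),
    Pairwise (Function.onFun Disjoint P) ∧ (⋃ i, P i) = A ∧
    Pairwise (Function.onFun Disjoint fun i => g i • P i) ∧ (⋃ i, g i • P i) = B

/-- `E` is `G`-paradoxical: `E` is nonempty and splits into two disjoint pieces,
each `G`-equidecomposable with `E`. -/
def Paradoxical (G : Type*) {X : Type*} [Group G] [MulAction G X] (E : Set X) : Prop :=
  E.Nonempty ∧ ∃ A B : Set X, A ∪ B = E ∧ Disjoint A B ∧
    Equidecomp' G A E ∧ Equidecomp' G B E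

abbrev E3 : Type := EuclideanSpace ℝ (Fin 3)
abbrev SO3 : Type := Matrix.specialOrthogonalGroup (Fin 3) ℝ

noncomputable instance : Group SO3 :=
  { (inferInstance : Monoid SO3) with
    inv := fun A => ⟨star A.1, by
      refine ⟨Unitary.star_mem A.2.1, ?_⟩
      show (star A.1).det = 1
      have h : A.1.det = 1 := A.2.2
      rw [Matrix.star_eq_conjTranspose, Matrix.det_conjTranspose, h]
      simp⟩
    inv_mul_cancel := fun A => Subtype.ext (Matrix.mem_unitaryGroup_iff'.mp A.2.1) }

noncomputable instance : SMul SO3 E3 := ⟨fun g x => WithLp.toLp 2 (g.1.mulVec x)⟩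

/-- `SO3` acts on `ℝ³` by rotation (matrix-vector multiplication). -/
noncomputable instance : MulAction SO3 E3 where
  one_smul x := WithLp.ofLp_injective 2 (Matrix.one_mulVec x)
  mul_smul g h x := WithLp.ofLp_injective 2 (Matrix.mulVec_mulVec x g.1 h.1).symm

lemma SO3.smul_add (g : SO3) (x y : E3) : g • (x + y) = g • x + g • y :=
  WithLp.ofLp_injective 2 (Matrix.mulVec_add g.1 x y)

lemma SO3.smul_neg (g : SO3) (x : E3) : g • (-x) = -(g • x) :=
  WithLp.ofLp_injective 2 (Matrix.mulVec_neg x g.1)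

/-!
Pick an orthonormal basis whose first vector spans `L`; conjugating the rotations about the
first coordinate axis by it gives a one-parameter group `θ ↦ ρ_θ` of rotations about `L`.
A point off `L` is fixed by `ρ_θ` only when `cos θ = 1`, so for `x, y ∈ D` the angles `t` with
`ρ_t x = y` form a translate of a countable set; as `ρ_θⁿ = ρ_{nθ}`, the angles with
`ρ_θⁿ x = y` for some `n ≥ 1` are countable too.
As `D` is countable, all but countably many `θ` give `D ∩ ρ_θⁿ D = ∅` for every `n ≥ 1`.
This makes the iterates `ρⁿ D` pairwise disjoint, and `ρ A = ⋃_{n ≥ 1} ρⁿ D = A \ D`.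
-/

open Matrix Real

section PowSmul

variable {G X : Type*} [Group G] [MulAction G X] {g : G} {D : Set X}

theorem pairwise_disjoint_pow_smul (h : ∀ n, 0 < n → Disjoint D (g ^ n • D)) :
    Pairwise (Function.onFun Disjoint fun n : ℕ => g ^ n • D) := by
  have hlt : ∀ m n : ℕ, m < n → Disjoint (g ^ m • D) (g ^ n • D) := fun m n hmn => by
    rw [← Nat.add_sub_cancel' hmn.le, pow_add, mul_smul, Set.disjoint_smul_set]
    exact h _ (Nat.sub_pos_of_lt hmn)
  intro m n hmn
  rcases hmn.lt_or_gt with hmn | hnm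
  · exact hlt m n hmn
  · exact (hlt n m hnm).symm

theorem smul_iUnion_pow_smul_eq_diff (h : ∀ n, 0 < n → Disjoint D (g ^ n • D)) :
    g • (⋃ n : ℕ, g ^ n • D) = (⋃ n : ℕ, g ^ n • D) \ D := by
  have hshift : g • (⋃ n : ℕ, g ^ n • D) = ⋃ n : ℕ, g ^ (n + 1) • D := by
    simp only [Set.smul_set_iUnion, smul_smul, pow_succ']
  rw [hshift, ← Set.union_iUnion_nat_succ (fun n => g ^ n • D), pow_zero, one_smul,
    Set.union_sdiff_left, eq_comm, sdiff_eq_self_iff_disjoint, Set.disjoint_iUnion_right]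
  exact fun n => h (n + 1) n.succ_pos

end PowSmul

namespace AddChar

variable {A G X : Type*} [AddCommGroup A] [Group G] [MulAction G X] (ψ : AddChar A G)

theorem countable_setOf_smul_eq {x : X} (hx : {a | ψ a • x = x}.Countable) (y : X) :
    {a | ψ a • x = y}.Countable := by
  rcases Set.eq_empty_or_nonempty {a | ψ a • x = y} with h | ⟨a₀, ha₀⟩
  · simp [h]
  refine (hx.image (a₀ + ·)).mono fun a (ha : ψ a • x = y) => ?_
  refine ⟨-a₀ + a, ?_, add_neg_cancel_left a₀ a⟩
  change ψ a₀ • x = y at ha₀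
  change ψ (-a₀ + a) • x = x
  rw [map_add_eq_mul, map_neg_eq_inv, mul_smul, inv_smul_eq_iff, ha, ha₀]

theorem exists_disjoint_pow_smul [Uncountable A] [IsAddTorsionFree A] {D : Set X}
    (hD : D.Countable) (hfix : ∀ x ∈ D, {a | ψ a • x = x}.Countable) :
    ∃ a, ∀ n, 0 < n → Disjoint D (ψ a ^ n • D) := by
  set bad := ⋃ x ∈ D, ⋃ y ∈ D, ⋃ n : {n : ℕ // n ≠ 0}, (n.1 • ·) ⁻¹' {a | ψ a • x = y}
  have hbad : bad.Countable :=
    hD.biUnion fun x hx => hD.biUnion fun y _ => Set.countable_iUnion fun n =>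
      (ψ.countable_setOf_smul_eq (hfix x hx) y).preimage (nsmul_right_injective n.2)
  obtain ⟨a, ha⟩ : badᶜ.Nonempty :=
    Set.nonempty_compl.mpr fun h => Set.not_countable_univ (h ▸ hbad)
  refine ⟨a, fun n hn => Set.disjoint_left.mpr ?_⟩
  rintro _ hy ⟨x, hx, rfl⟩
  refine ha (Set.mem_biUnion hx (Set.mem_biUnion hy (Set.mem_iUnion.mpr ⟨⟨n, hn.ne'⟩, ?_⟩)))
  simp [map_nsmul_eq_pow]

end AddChar

theorem Real.countable_setOf_cos_eq_one : {θ : ℝ | cos θ = 1}.Countable :=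
  (Set.countable_range fun k : ℤ => k * (2 * π)).mono fun θ hθ => (cos_eq_one_iff θ).mp hθ

section OrthonormalBasis

variable {ι 𝕜 E : Type*} [Fintype ι] [RCLike 𝕜] [NormedAddCommGroup E] [InnerProductSpace 𝕜 E]

theorem OrthonormalBasis.mem_span_singleton_iff [DecidableEq ι] (b : OrthonormalBasis ι 𝕜 E)
    (i : ι) {x : E} :
    x ∈ Submodule.span 𝕜 {b i} ↔ ∀ j ≠ i, b.repr x j = 0 := by
  constructor
  · rintro hx j hj
    obtain ⟨c, rfl⟩ := Submodule.mem_span_singleton.mp hx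
    simp [b.repr_self, hj]
  · intro hx
    rw [← b.sum_repr x, Finset.sum_eq_single i (fun j _ hj => by simp [hx j hj]) (by simp)]
    exact Submodule.smul_mem _ _ (Submodule.mem_span_singleton_self _)

theorem exists_orthonormalBasis_span_singleton_eq [FiniteDimensional 𝕜 E]
    (hcard : Module.finrank 𝕜 E = Fintype.card ι) (i : ι) {u : E} (hu : u ≠ 0) :
    ∃ b : OrthonormalBasis ι 𝕜 E, Submodule.span 𝕜 {b i} = Submodule.span 𝕜 {u} := by
  have hunit : Orthonormal 𝕜 (({i} : Set ι).domRestrict fun _ => (‖u‖⁻¹ : 𝕜) • u) :=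
    ⟨fun _ => norm_smul_inv_norm hu, fun j k hjk => absurd (Subtype.ext (j.2.trans k.2.symm)) hjk⟩
  obtain ⟨b, hb⟩ := hunit.exists_orthonormalBasis_extension_of_card_eq hcard
  refine ⟨b, ?_⟩
  rw [hb i rfl, Submodule.span_singleton_smul_eq (IsUnit.mk0 _ (by simpa using hu))]

end OrthonormalBasis

theorem EuclideanSpace.basisFun_toMatrix_mulVec {ι 𝕜 : Type*} [Fintype ι] [DecidableEq ι]
    [RCLike 𝕜] (b : OrthonormalBasis ι 𝕜 (EuclideanSpace 𝕜 ι)) (y : EuclideanSpace 𝕜 ι) :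
    (basisFun ι 𝕜).toBasis.toMatrix b *ᵥ y.ofLp = (b.repr.symm y).ofLp := by
  ext i
  simp [Matrix.mulVec, dotProduct, Module.Basis.toMatrix_apply, ← b.sum_repr_symm, mul_comm]

noncomputable def Matrix.specialUnitaryGroup.conj {n α : Type*} [Fintype n] [DecidableEq n]
    [CommRing α] [StarRing α] (U : unitaryGroup n α) :
    specialUnitaryGroup n α →* specialUnitaryGroup n α where
  toFun g := ⟨U * g.1 * star U.1, by
    refine ⟨mul_mem (mul_mem U.2 g.2.1) (Unitary.star_mem U.2), ?_⟩
    have hg : g.1.det = 1 := g.2.2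
    change (U * g.1 * star U.1).det = 1
    rw [det_mul, det_mul, hg, mul_one, ← det_mul, Unitary.mul_star_self_of_mem U.2, det_one]⟩
  map_one' := Subtype.ext <| by
    change U * 1 * star U.1 = 1
    rw [mul_one, Unitary.mul_star_self_of_mem U.2]
  map_mul' g h := Subtype.ext <| by
    change U * (g.1 * h.1) * star U.1 = U * g.1 * star U.1 * (U * h.1 * star U.1)
    simp only [mul_assoc]
    rw [← mul_assoc (star U.1), Unitary.star_mul_self_of_mem U.2, one_mul]

namespace SO3

theorem ofLp_smul (g : SO3) (x : E3) : (g • x).ofLp = g.1 *ᵥ x.ofLp := rfl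

noncomputable def rotXMatrix (θ : ℝ) : Matrix (Fin 3) (Fin 3) ℝ :=
  !![1, 0, 0; 0, cos θ, -sin θ; 0, sin θ, cos θ]

theorem rotXMatrix_add (a b : ℝ) : rotXMatrix (a + b) = rotXMatrix a * rotXMatrix b := by
  ext i j
  fin_cases i <;> fin_cases j <;>
    simp [rotXMatrix, Matrix.mul_apply, Fin.sum_univ_three, cos_add, sin_add] <;> ring

theorem rotXMatrix_zero : rotXMatrix 0 = 1 := by
  ext i j
  fin_cases i <;> fin_cases j <;> simp [rotXMatrix]

theorem star_rotXMatrix (θ : ℝ) : star (rotXMatrix θ) = rotXMatrix (-θ) := by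
  ext i j
  fin_cases i <;> fin_cases j <;> simp [rotXMatrix]

theorem det_rotXMatrix (θ : ℝ) : (rotXMatrix θ).det = 1 := by
  simp [rotXMatrix, det_fin_three, ← sq, add_comm]

theorem rotXMatrix_mem (θ : ℝ) : rotXMatrix θ ∈ specialOrthogonalGroup (Fin 3) ℝ := by
  refine ⟨mem_unitaryGroup_iff'.mpr ?_, det_rotXMatrix θ⟩
  rw [star_rotXMatrix, ← rotXMatrix_add, neg_add_cancel, rotXMatrix_zero]

noncomputable def rotX : AddChar ℝ SO3 where
  toFun θ := ⟨rotXMatrix θ, rotXMatrix_mem θ⟩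
  map_zero_eq_one' := Subtype.ext rotXMatrix_zero
  map_add_eq_mul' a b := Subtype.ext (rotXMatrix_add a b)

theorem rotX_smul_apply (θ : ℝ) (y : E3) :
    rotX θ • y = !₂[y 0, cos θ * y 1 - sin θ * y 2, sin θ * y 1 + cos θ * y 2] := by
  ext i
  fin_cases i <;> simp [ofLp_smul, rotX, rotXMatrix, vecHead, vecTail, sub_eq_add_neg]

theorem rotX_smul_eq_self {θ : ℝ} {y : E3} (hy : ∀ j ≠ 0, y j = 0) : rotX θ • y = y := by
  ext i
  fin_cases i <;> simp [rotX_smul_apply, hy 1 (by decide), hy 2 (by decide)]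

theorem cos_eq_one_of_rotX_smul_eq_self {θ : ℝ} {y : E3} (hy : ∃ j ≠ 0, y j ≠ 0)
    (h : rotX θ • y = y) : cos θ = 1 := by
  have h1 : cos θ * y 1 - sin θ * y 2 = y 1 := by simpa [rotX_smul_apply] using congrArg (· 1) h
  have h2 : sin θ * y 1 + cos θ * y 2 = y 2 := by simpa [rotX_smul_apply] using congrArg (· 2) h
  have hpos : 0 < y 1 ^ 2 + y 2 ^ 2 := by
    obtain ⟨j, hj, hyj⟩ := hy
    fin_cases j
    · exact absurd rfl hj
    · have := sq_pos_of_ne_zero hyj; positivity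
    · have := sq_pos_of_ne_zero hyj; positivity
  have hcos : (cos θ - 1) * (y 1 ^ 2 + y 2 ^ 2) = 0 := by
    linear_combination y 1 * h1 + y 2 * h2
  linarith [(mul_eq_zero.mp hcos).resolve_right hpos.ne']

theorem ofLp_conj_smul (U : unitaryGroup (Fin 3) ℝ) (g : SO3) (x : E3) :
    (specialUnitaryGroup.conj U g • x).ofLp = U.1 *ᵥ g.1 *ᵥ star U.1 *ᵥ x.ofLp := by
  simp [ofLp_smul, specialUnitaryGroup.conj, Matrix.mulVec_mulVec, mul_assoc]

variable (b : OrthonormalBasis (Fin 3) ℝ E3)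

noncomputable def rotAbout : AddChar ℝ SO3 :=
  (specialUnitaryGroup.conj
    ⟨_, (EuclideanSpace.basisFun _ ℝ).toMatrix_orthonormalBasis_mem_unitary b⟩).compAddChar rotX

theorem rotAbout_smul (θ : ℝ) (x : E3) :
    rotAbout b θ • x = b.repr.symm (rotX θ • b.repr x) := by
  apply WithLp.ofLp_injective 2
  rw [rotAbout, MonoidHom.compAddChar_apply, Function.comp_apply, ofLp_conj_smul]
  set U := (EuclideanSpace.basisFun (Fin 3) ℝ).toBasis.toMatrix b
  have hU : U ∈ unitaryGroup (Fin 3) ℝ :=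
    (EuclideanSpace.basisFun (Fin 3) ℝ).toMatrix_orthonormalBasis_mem_unitary b
  have hstar : star U *ᵥ x.ofLp = (b.repr x).ofLp := by
    rw [← b.repr.symm_apply_apply x, ← EuclideanSpace.basisFun_toMatrix_mulVec, mulVec_mulVec,
      Unitary.star_mul_self_of_mem hU, one_mulVec, b.repr.symm_apply_apply]
  rw [hstar, ← ofLp_smul, EuclideanSpace.basisFun_toMatrix_mulVec]

theorem rotAbout_smul_of_mem {x : E3} (hx : x ∈ Submodule.span ℝ {b 0}) (θ : ℝ) :
    rotAbout b θ • x = x := by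
  rw [rotAbout_smul, rotX_smul_eq_self ((b.mem_span_singleton_iff 0).mp hx),
    LinearIsometryEquiv.symm_apply_apply]

theorem countable_setOf_rotAbout_smul_eq_self {x : E3} (hx : x ∉ Submodule.span ℝ {b 0}) :
    {θ | rotAbout b θ • x = x}.Countable := by
  rw [b.mem_span_singleton_iff 0] at hx
  push Not at hx
  refine Real.countable_setOf_cos_eq_one.mono fun θ (hθ : rotAbout b θ • x = x) => ?_
  rw [rotAbout_smul, LinearIsometryEquiv.symm_apply_eq] at hθ
  exact cos_eq_one_of_rotX_smul_eq_self hx hθ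

end SO3

/-- Generalized irrational rotation: given a countable `D ⊂ ℝ³` and a line `L` through
the origin (spanned by `u ≠ 0`) not meeting `D`, there is a rotation `ρ` about `L` whose
iterates `ρⁿ D` are pairwise disjoint; hence with `A = ⋃ₙ ρⁿ D` one has `ρ • A = A \ D`. -/
theorem generalized_irrational_rotation (D : Set E3) (hD : D.Countable)
    (u : E3) (hu : u ≠ 0) (hdisj : ∀ x ∈ D, x ∉ Submodule.span ℝ {u}) :
    ∃ ρ : SO3, (∀ x ∈ Submodule.span ℝ {u}, ρ • x = x) ∧
      Pairwise (Function.onFun Disjoint fun n : ℕ => ρ ^ n • D) ∧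
      ρ • (⋃ n : ℕ, ρ ^ n • D) = (⋃ n : ℕ, ρ ^ n • D) \ D := by
  obtain ⟨b, hb⟩ := exists_orthonormalBasis_span_singleton_eq (𝕜 := ℝ) (by simp) (0 : Fin 3) hu
  obtain ⟨θ, hθ⟩ := (SO3.rotAbout b).exists_disjoint_pow_smul hD fun x hx =>
    SO3.countable_setOf_rotAbout_smul_eq_self b (hb ▸ hdisj x hx)
  exact ⟨SO3.rotAbout b θ, fun x hx => SO3.rotAbout_smul_of_mem b (hb ▸ hx) θ,
    pairwise_disjoint_pow_smul hθ, smul_iUnion_pow_smul_eq_diff hθ⟩
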